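/- With the Q̃-representation setup and V_k ⊆ ℕ_k, the Lebesgue measure of Γ_{Q̃(V)} equals ∏_{k=1}^∞ (∑_{i ∈ V_k} q_{ik}). -/
import Mathlib

open MeasureTheory Filter Finset Topology

/-- The coding map of the `Q̃`-representation: it sends a digit sequence
`ω`, with `k`-th digit in `{0, 1, ..., N k}`, to the point of `[0,1]` given by
formula (5) of the paper: `x = ∑_k D_k(x) L_{k-1}(x)`, i.e. the unique point in
the intersection of the nested cylinder intervals `Δ_{ω₁...ω_k}`. -/
noncomputable def codingMap (N : ℕ → ℕ) (q : (k : ℕ) → Fin (N k + 1) → ℝ)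
    (ω : (k : ℕ) → Fin (N k + 1)) : ℝ :=
  ∑' k : ℕ, (∑ j : Fin (N k + 1), if (j : ℕ) < (ω k : ℕ) then q k j else 0) *
    ∏ s ∈ Finset.range k, q s (ω s)

/-- `Γ_{Q̃(V)}`: the set of points of `[0,1]` admitting a `Q̃`-representation
whose `k`-th digit lies in `V k` for every `k`. -/
noncomputable def QtSet (N : ℕ → ℕ) (q : (k : ℕ) → Fin (N k + 1) → ℝ)
    (V : (k : ℕ) → Finset (Fin (N k + 1))) : Set ℝ :=
  codingMap N q '' {ω | ∀ k, ω k ∈ V k}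

namespace QtAux

variable {N : ℕ → ℕ} (q : (k : ℕ) → Fin (N k + 1) → ℝ)

/-- Length of the rank-`n` cylinder containing `ω`. -/
noncomputable def lenQ (ω : (k : ℕ) → Fin (N k + 1)) (n : ℕ) : ℝ :=
  ∏ s ∈ Finset.range n, q s (ω s)

/-- `c`-coefficient: sum of `q k j` for `j < i`. -/
noncomputable def cQ (k : ℕ) (i : Fin (N k + 1)) : ℝ :=
  ∑ j : Fin (N k + 1), if (j : ℕ) < (i : ℕ) then q k j else 0

/-- Left endpoint of the rank-`n` cylinder containing `ω`. -/
noncomputable def aQ (ω : (k : ℕ) → Fin (N k + 1)) (n : ℕ) : ℝ :=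
  ∑ k ∈ Finset.range n, cQ q k (ω k) * lenQ q ω k

variable {q}
variable (hq : ∀ k i, 0 < q k i) (hsum : ∀ k, ∑ i, q k i = 1)

section basic
include hq

theorem lenQ_pos (ω : (k : ℕ) → Fin (N k + 1)) (n : ℕ) : 0 < lenQ q ω n :=
  Finset.prod_pos fun s _ => hq s (ω s)

end basic

theorem lenQ_succ (ω : (k : ℕ) → Fin (N k + 1)) (n : ℕ) :
    lenQ q ω (n + 1) = lenQ q ω n * q n (ω n) :=
  Finset.prod_range_succ _ n

theorem aQ_succ (ω : (k : ℕ) → Fin (N k + 1)) (n : ℕ) :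
    aQ q ω (n + 1) = aQ q ω n + cQ q n (ω n) * lenQ q ω n :=
  Finset.sum_range_succ _ n

theorem lenQ_congr {ω ω' : (k : ℕ) → Fin (N k + 1)} {n : ℕ}
    (h : ∀ k < n, ω k = ω' k) : lenQ q ω n = lenQ q ω' n :=
  Finset.prod_congr rfl fun s hs => by rw [h s (Finset.mem_range.1 hs)]

theorem aQ_congr {ω ω' : (k : ℕ) → Fin (N k + 1)} {n : ℕ}
    (h : ∀ k < n, ω k = ω' k) : aQ q ω n = aQ q ω' n := by
  refine Finset.sum_congr rfl fun k hk => ?_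
  have hk' := Finset.mem_range.1 hk
  rw [h k hk', lenQ_congr fun s hs => h s (hs.trans hk')]

include hq in
theorem cQ_nonneg (k : ℕ) (i : Fin (N k + 1)) : 0 ≤ cQ q k i :=
  Finset.sum_nonneg fun j _ => by split <;> [exact (hq k j).le; rfl]

include hq in
theorem cQ_lt_mono (k : ℕ) {i i' : Fin (N k + 1)} (h : (i : ℕ) < (i' : ℕ)) :
    cQ q k i + q k i ≤ cQ q k i' := by
  have : cQ q k i + q k i = ∑ j : Fin (N k + 1), if (j : ℕ) ≤ (i : ℕ) then q k j else 0 := by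
    rw [cQ]
    have : ∀ j : Fin (N k + 1), (if (j : ℕ) ≤ (i : ℕ) then q k j else 0) =
        (if (j : ℕ) < (i : ℕ) then q k j else 0) + (if j = i then q k j else 0) := by
      intro j
      rcases lt_trichotomy (j : ℕ) (i : ℕ) with hj | hj | hj
      · simp [hj.le, hj, Fin.ne_of_val_ne (Nat.ne_of_lt hj)]
      · have : j = i := Fin.ext hj
        simp [this]
      · simp [Nat.not_le_of_lt hj, Nat.lt_asymm hj, Fin.ne_of_val_ne (Nat.ne_of_gt hj)]
    rw [Finset.sum_congr rfl fun j _ => this j, Finset.sum_add_distrib,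
      Finset.sum_ite_eq' Finset.univ i (fun j => q k j)]
    simp
  rw [this, cQ]
  refine Finset.sum_le_sum fun j _ => ?_
  by_cases hj : (j : ℕ) ≤ (i : ℕ)
  · simp [hj, lt_of_le_of_lt hj h]
  · simp only [hj, if_false]
    split <;> [exact (hq k j).le; rfl]

include hq hsum in
theorem cQ_add_le_one (k : ℕ) (i : Fin (N k + 1)) : cQ q k i + q k i ≤ 1 := by
  rcases lt_or_eq_of_le (Nat.lt_succ_iff.1 i.2) with hi | hi
  · -- i is not the largest digit
    have h := cQ_lt_mono hq k (i := i) (i' := Fin.last (N k)) hi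
    refine h.trans ?_
    rw [← hsum k, cQ]
    refine Finset.sum_le_sum fun j _ => ?_
    split <;> [rfl; exact (hq k j).le]
  · -- i is the largest digit
    rw [← hsum k, cQ]
    have : q k i = ∑ j : Fin (N k + 1), if j = i then q k j else 0 := by
      rw [Finset.sum_ite_eq' Finset.univ i (fun j => q k j)]; simp
    rw [this, ← Finset.sum_add_distrib]
    refine Finset.sum_le_sum fun j _ => ?_
    rcases eq_or_ne j i with hj | hj
    · simp [hj]
    · have hne : (j : ℕ) ≠ (i : ℕ) := fun h => hj (Fin.ext h)
      have hle := Nat.lt_succ_iff.1 j.2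
      have : (j : ℕ) < (i : ℕ) := by omega
      simp [this, hj]

include hq in
theorem aQ_mono (ω : (k : ℕ) → Fin (N k + 1)) : Monotone (aQ q ω) := by
  refine monotone_nat_of_le_succ fun n => ?_
  rw [aQ_succ]
  nlinarith [cQ_nonneg hq n (ω n), lenQ_pos hq ω n]

include hq hsum in
theorem aQ_add_lenQ_anti (ω : (k : ℕ) → Fin (N k + 1)) :
    Antitone (fun n => aQ q ω n + lenQ q ω n) := by
  refine antitone_nat_of_succ_le fun n => ?_
  rw [aQ_succ, lenQ_succ]
  have h1 := cQ_add_le_one hq hsum n (ω n)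
  have h2 := lenQ_pos hq ω n
  nlinarith

include hq hsum in
theorem summable_coding (ω : (k : ℕ) → Fin (N k + 1)) :
    Summable (fun k => cQ q k (ω k) * lenQ q ω k) := by
  refine summable_of_sum_range_le (c := 1) (fun k => mul_nonneg (cQ_nonneg hq k (ω k))
    (lenQ_pos hq ω k).le) fun n => ?_
  calc ∑ k ∈ Finset.range n, cQ q k (ω k) * lenQ q ω k = aQ q ω n := rfl
    _ ≤ aQ q ω n + lenQ q ω n := le_add_of_nonneg_right (lenQ_pos hq ω n).le
    _ ≤ aQ q ω 0 + lenQ q ω 0 := aQ_add_lenQ_anti hq hsum ω (Nat.zero_le n)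
    _ = 1 := by simp [aQ, lenQ]

include hq hsum in
theorem tendsto_aQ (ω : (k : ℕ) → Fin (N k + 1)) :
    Tendsto (aQ q ω) atTop (𝓝 (codingMap N q ω)) :=
  (summable_coding hq hsum ω).hasSum.tendsto_sum_nat

include hq hsum in
theorem coding_mem (ω : (k : ℕ) → Fin (N k + 1)) (n : ℕ) :
    codingMap N q ω ∈ Set.Icc (aQ q ω n) (aQ q ω n + lenQ q ω n) := by
  constructor
  · exact (aQ_mono hq ω).ge_of_tendsto (tendsto_aQ hq hsum ω) n
  · refine le_of_tendsto (tendsto_aQ hq hsum ω) (eventually_atTop.2 ⟨n, fun m hm => ?_⟩)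
    calc aQ q ω m ≤ aQ q ω m + lenQ q ω m := le_add_of_nonneg_right (lenQ_pos hq ω m).le
      _ ≤ aQ q ω n + lenQ q ω n := aQ_add_lenQ_anti hq hsum ω hm

include hq in
theorem lenQ_le (ω : (k : ℕ) → Fin (N k + 1)) (n : ℕ) :
    lenQ q ω n ≤ ∏ k ∈ Finset.range n, ⨆ i, q k i := by
  refine Finset.prod_le_prod (fun k _ => (hq k (ω k)).le) fun k _ => ?_
  exact le_ciSup (Set.Finite.bddAbove (Set.finite_range _)) (ω k)

include hq in
theorem lenQ_tendsto
    (hmax : Tendsto (fun n => ∏ k ∈ Finset.range n, ⨆ i, q k i) atTop (nhds 0))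
    (ω : (k : ℕ) → Fin (N k + 1)) : Tendsto (lenQ q ω) atTop (𝓝 0) :=
  squeeze_zero (fun n => (lenQ_pos hq ω n).le) (lenQ_le hq ω) hmax

include hq hsum in
theorem separation {ω ω' : (k : ℕ) → Fin (N k + 1)} {m n : ℕ} (hmn : m < n)
    (hagree : ∀ s < m, ω s = ω' s) (hlt : (ω m : ℕ) < (ω' m : ℕ)) :
    aQ q ω n + lenQ q ω n ≤ aQ q ω' n := by
  have h1 : aQ q ω n + lenQ q ω n ≤ aQ q ω (m + 1) + lenQ q ω (m + 1) :=
    aQ_add_lenQ_anti hq hsum ω hmn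
  have h2 : aQ q ω (m + 1) + lenQ q ω (m + 1) ≤ aQ q ω' (m + 1) := by
    rw [aQ_succ, lenQ_succ, aQ_succ, aQ_congr hagree, lenQ_congr hagree]
    have h3 := cQ_lt_mono hq m hlt
    have h4 := lenQ_pos hq ω' m
    nlinarith
  exact h1.trans (h2.trans (aQ_mono hq ω' hmn))

/-- Extension of a length-`n` prefix by default digits `d`. -/
def extSeq (d : ∀ k, Fin (N k + 1)) (n : ℕ) (p : ∀ k : Fin n, Fin (N (k : ℕ) + 1)) :
    ∀ k : ℕ, Fin (N k + 1) :=
  fun k => if h : k < n then p ⟨k, h⟩ else d k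

variable (q) in
/-- Half-open cylinder of a length-`n` prefix. -/
noncomputable def cylIco (d : ∀ k, Fin (N k + 1)) (n : ℕ)
    (p : ∀ k : Fin n, Fin (N (k : ℕ) + 1)) : Set ℝ :=
  Set.Ico (aQ q (extSeq d n p) n) (aQ q (extSeq d n p) n + lenQ q (extSeq d n p) n)

include hq hsum in
theorem cyl_disjoint (d : ∀ k, Fin (N k + 1)) {n : ℕ}
    {p p' : ∀ k : Fin n, Fin (N (k : ℕ) + 1)} (hne : p ≠ p') :
    Disjoint (cylIco q d n p) (cylIco q d n p') := by
  set ω := extSeq d n p with hωdef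
  set ω' := extSeq d n p' with hω'def
  have hex : ∃ m, ω m ≠ ω' m := by
    by_contra h
    push_neg at h
    refine hne (funext fun k => ?_)
    have := h (k : ℕ)
    simpa [hωdef, hω'def, extSeq] using this
  set m := Nat.find hex with hmdef
  have hm : ω m ≠ ω' m := Nat.find_spec hex
  have hmlt : m < n := by
    by_contra h
    push_neg at h
    exact hm (by simp [hωdef, hω'def, extSeq, Nat.not_lt.2 h])
  have hagree : ∀ s < m, ω s = ω' s := fun s hs => not_not.1 (Nat.find_min hex hs)
  have hagree' : ∀ s < m, ω' s = ω s := fun s hs => (hagree s hs).symm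
  have hvne : (ω m : ℕ) ≠ (ω' m : ℕ) := fun h => hm (Fin.ext h)
  unfold cylIco
  rw [Set.Ico_disjoint_Ico]
  rcases hvne.lt_or_gt with h | h
  · exact le_trans (min_le_left _ _)
      (le_trans (separation hq hsum hmlt hagree h) (le_max_right _ _))
  · exact le_trans (min_le_right _ _)
      (le_trans (separation hq hsum hmlt hagree' h) (le_max_left _ _))

/-- Truncation of a prefix. -/
def truncP (n m : ℕ) (h : m ≤ n) (p : ∀ k : Fin n, Fin (N (k : ℕ) + 1)) :
    ∀ k : Fin m, Fin (N (k : ℕ) + 1) :=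
  fun k => p ⟨(k : ℕ), lt_of_lt_of_le k.2 h⟩

theorem extSeq_trunc_agree (d : ∀ k, Fin (N k + 1)) {n m : ℕ} (h : m ≤ n)
    (p : ∀ k : Fin n, Fin (N (k : ℕ) + 1)) :
    ∀ k < m, extSeq d n p k = extSeq d m (truncP n m h p) k := by
  intro k hk
  simp [extSeq, hk, lt_of_lt_of_le hk h, truncP]

include hq hsum in
theorem cyl_trunc_subset (d : ∀ k, Fin (N k + 1)) {n m : ℕ} (h : m ≤ n)
    (p : ∀ k : Fin n, Fin (N (k : ℕ) + 1)) :
    cylIco q d n p ⊆ cylIco q d m (truncP n m h p) := by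
  have h1 := aQ_congr (q := q) (extSeq_trunc_agree d h p)
  have h2 := lenQ_congr (q := q) (extSeq_trunc_agree d h p)
  unfold cylIco
  rw [← h1, ← h2]
  exact Set.Ico_subset_Ico (aQ_mono hq _ h) (aQ_add_lenQ_anti hq hsum _ h)

theorem sum_lenQ (d : ∀ k, Fin (N k + 1)) (V : ∀ k, Finset (Fin (N k + 1))) (n : ℕ) :
    ∑ p ∈ Fintype.piFinset (fun k : Fin n => V (k : ℕ)), lenQ q (extSeq d n p) n
      = ∏ k ∈ Finset.range n, ∑ i ∈ V k, q k i := by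
  rw [← Fin.prod_univ_eq_prod_range (fun k => ∑ i ∈ V k, q k i) n, Finset.prod_univ_sum]
  refine Finset.sum_congr rfl fun p _ => ?_
  rw [lenQ, ← Fin.prod_univ_eq_prod_range (fun s => q s (extSeq d n p s)) n]
  exact Finset.prod_congr rfl fun k _ => by simp [extSeq]

include hq hsum in
theorem iInter_subset_qtSet
    (hmax : Tendsto (fun n => ∏ k ∈ Finset.range n, ⨆ i, q k i) atTop (nhds 0))
    (V : ∀ k, Finset (Fin (N k + 1))) (d : ∀ k, Fin (N k + 1)) (_hd : ∀ k, d k ∈ V k) :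
    (⋂ n, ⋃ p ∈ Fintype.piFinset (fun k : Fin n => V (k : ℕ)), cylIco q d n p)
      ⊆ QtSet N q V := by
  intro x hx
  have hx' : ∀ n, ∃ p ∈ Fintype.piFinset (fun k : Fin n => V (k : ℕ)), x ∈ cylIco q d n p := by
    intro n
    have := Set.mem_iInter.1 hx n
    simpa using this
  choose p hp1 hp2 using hx'
  have key : ∀ m n (h : m ≤ n), truncP n m h (p n) = p m := by
    intro m n h
    by_contra hne
    have hdisj := cyl_disjoint hq hsum d hne
    have hxm : x ∈ cylIco q d m (truncP n m h (p n)) :=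
      cyl_trunc_subset hq hsum d h (p n) (hp2 n)
    exact (Set.disjoint_left.1 hdisj) hxm (hp2 m)
  set ω : ∀ k, Fin (N k + 1) := fun k => p (k + 1) ⟨k, Nat.lt_succ_self k⟩ with hωdef
  have hres : ∀ n, ∀ k, k < n → ω k = extSeq d n (p n) k := by
    intro n k hk
    show p (k + 1) ⟨k, Nat.lt_succ_self k⟩ = extSeq d n (p n) k
    rw [← key (k + 1) n hk]
    simp [truncP, extSeq, hk]
  have hmem : ∀ n, x ∈ Set.Ico (aQ q ω n) (aQ q ω n + lenQ q ω n) := by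
    intro n
    have hthis := hp2 n
    unfold cylIco at hthis
    rwa [← aQ_congr (hres n), ← lenQ_congr (hres n)] at hthis
  have hωV : ∀ k, ω k ∈ V k := fun k =>
    Fintype.mem_piFinset.1 (hp1 (k + 1)) ⟨k, Nat.lt_succ_self k⟩
  refine ⟨ω, hωV, ?_⟩
  have h1 : Tendsto (aQ q ω) atTop (𝓝 (codingMap N q ω)) := tendsto_aQ hq hsum ω
  have h2 : Tendsto (aQ q ω) atTop (𝓝 x) := by
    rw [tendsto_iff_dist_tendsto_zero]
    refine squeeze_zero (fun n => dist_nonneg) (fun n => ?_) (lenQ_tendsto hq hmax ω)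
    have h3 := hmem n
    have h4 := (lenQ_pos hq ω n).le
    rw [Real.dist_eq, abs_le]
    constructor <;> [linarith [h3.2]; linarith [h3.1]]
  exact tendsto_nhds_unique h1 h2

end QtAux

/-- Lemma 1: the Lebesgue measure of `Γ_{Q̃(V)}` equals the infinite product
`∏_{k=1}^∞ S_k(V)` where `S_k(V) = ∑_{i ∈ V_k} q_{ik}`, the infinite product
being the limit `L` of the partial products. -/
theorem qtSet_measure_eq_infinite_product (N : ℕ → ℕ)
    (q : (k : ℕ) → Fin (N k + 1) → ℝ) (V : (k : ℕ) → Finset (Fin (N k + 1)))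
    (hq : ∀ k i, 0 < q k i) (hsum : ∀ k, ∑ i, q k i = 1)
    (hmax : Tendsto (fun n => ∏ k ∈ Finset.range n, ⨆ i, q k i) atTop (nhds 0))
    (hV : ∀ k, (V k).Nonempty) (L : ℝ)
    (hL : Tendsto (fun n => ∏ k ∈ Finset.range n, ∑ i ∈ V k, q k i) atTop (nhds L)) :
    volume (QtSet N q V) = ENNReal.ofReal L := by
  classical
  open QtAux in
  choose d hd using hV
  set S : (n : ℕ) → Finset (∀ k : Fin n, Fin (N (k : ℕ) + 1)) :=
    fun n => Fintype.piFinset (fun k : Fin n => V (k : ℕ)) with hSdef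
  set C : ℕ → Set ℝ := fun n => ⋃ p ∈ S n, cylIco q d n p with hCdef
  set P : ℕ → ℝ := fun n => ∏ k ∈ Finset.range n, ∑ i ∈ V k, q k i with hPdef
  have hPnonneg : ∀ n p, p ∈ S n → (0:ℝ) ≤ lenQ q (extSeq d n p) n :=
    fun n p _ => (lenQ_pos hq _ n).le
  have h_meas : ∀ n, MeasurableSet (C n) := fun n =>
    Set.Finite.measurableSet_biUnion (Finset.finite_toSet (S n))
      (fun p _ => measurableSet_Ico)
  have h_meas_eq : ∀ n, volume (C n) = ENNReal.ofReal (P n) := by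
    intro n
    rw [hCdef]
    rw [measure_biUnion_finset
      (fun p _ p' _ hne => cyl_disjoint hq hsum d hne)
      (fun p _ => measurableSet_Ico)]
    have : ∀ p ∈ S n, volume (cylIco q d n p) = ENNReal.ofReal (lenQ q (extSeq d n p) n) := by
      intro p _
      rw [cylIco, Real.volume_Ico, add_sub_cancel_left]
    rw [Finset.sum_congr rfl this, ← ENNReal.ofReal_sum_of_nonneg (hPnonneg n), sum_lenQ]
  have h_tendsto : Tendsto (fun n => ENNReal.ofReal (P n)) atTop (𝓝 (ENNReal.ofReal L)) :=
    (ENNReal.continuous_ofReal.tendsto L).comp hL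
  have h_upper : ∀ n, volume (QtSet N q V) ≤ ENNReal.ofReal (P n) := by
    intro n
    have hsub : QtSet N q V ⊆ ⋃ p ∈ S n, Set.Icc (aQ q (extSeq d n p) n)
        (aQ q (extSeq d n p) n + lenQ q (extSeq d n p) n) := by
      rintro x ⟨ω, hω, rfl⟩
      have hmemS : (fun k : Fin n => ω (k : ℕ)) ∈ S n :=
        Fintype.mem_piFinset.2 fun k => hω (k : ℕ)
      refine Set.mem_biUnion hmemS ?_
      have hagree : ∀ k, k < n → ω k = extSeq d n (fun k : Fin n => ω (k : ℕ)) k := by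
        intro k hk
        simp [extSeq, hk]
      rw [← aQ_congr hagree, ← lenQ_congr hagree]
      exact coding_mem hq hsum ω n
    calc volume (QtSet N q V) ≤ volume (⋃ p ∈ S n, Set.Icc (aQ q (extSeq d n p) n)
          (aQ q (extSeq d n p) n + lenQ q (extSeq d n p) n)) := measure_mono hsub
      _ ≤ ∑ p ∈ S n, volume (Set.Icc (aQ q (extSeq d n p) n)
          (aQ q (extSeq d n p) n + lenQ q (extSeq d n p) n)) := measure_biUnion_finset_le _ _
      _ = ∑ p ∈ S n, ENNReal.ofReal (lenQ q (extSeq d n p) n) := by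
          refine Finset.sum_congr rfl fun p _ => ?_
          rw [Real.volume_Icc, add_sub_cancel_left]
      _ = ENNReal.ofReal (P n) := by
          rw [← ENNReal.ofReal_sum_of_nonneg (hPnonneg n), hPdef]
          rw [sum_lenQ]
  have h_anti : Antitone C := by
    refine antitone_nat_of_succ_le fun n x hx => ?_
    rcases Set.mem_iUnion₂.1 hx with ⟨p, hp, hxp⟩
    refine Set.mem_iUnion₂.2 ⟨truncP (n + 1) n (Nat.le_succ n) p, ?_,
      cyl_trunc_subset hq hsum d (Nat.le_succ n) p hxp⟩
    exact Fintype.mem_piFinset.2 fun k =>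
      Fintype.mem_piFinset.1 hp ⟨(k : ℕ), Nat.lt_succ_of_lt k.2⟩
  have h_iInter : Tendsto (fun n => volume (C n)) atTop (𝓝 (volume (⋂ n, C n))) :=
    tendsto_measure_iInter_atTop (fun n => (h_meas n).nullMeasurableSet) h_anti
      ⟨0, by rw [h_meas_eq 0]; exact ENNReal.ofReal_ne_top⟩
  have h_iInter' : Tendsto (fun n => volume (C n)) atTop (𝓝 (ENNReal.ofReal L)) := by
    have : (fun n => volume (C n)) = fun n => ENNReal.ofReal (P n) := funext h_meas_eq
    rw [this]
    exact h_tendsto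
  have h_vol_iInter : volume (⋂ n, C n) = ENNReal.ofReal L :=
    tendsto_nhds_unique h_iInter h_iInter'
  have h_lower : ENNReal.ofReal L ≤ volume (QtSet N q V) := by
    rw [← h_vol_iInter]
    exact measure_mono (iInter_subset_qtSet hq hsum hmax V d hd)
  exact le_antisymm (ge_of_tendsto' h_tendsto h_upper) h_lower
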